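/- In the imbalanced (m,3)-RPS, if in some strategy profile no player assigns positive probability to S, then R is strictly dominated by P for every player; consequently every such profile that is a Nash equilibrium must have all players playing P with probability 1, which is itself not a Nash equilibrium since deviating to S yields payoff m−1 > 0. -/

import Mathlib

/-- Objects: `0 = R`, `1 = P`, `2 = S`. The winning object for a profile of
choices in the imbalanced `(m,3)`-RPS: any multiset containing at least one `S`
and one `R` is a win for `R`; any multiset of only `R` and `P` is a win for `P`
(an all-`R` multiset is an all-way tie, won by `R`); any multiset of only `P`
and `S` is a win for `S`. -/
def imbWinner {m : ℕ} (c : Fin m → Fin 3) : Fin 3 :=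
  if (∃ i, c i = 0) ∧ (∃ i, c i = 2) then 0
  else if (∃ i, c i = 0) ∧ (∃ i, c i = 1) then 1
  else if (∃ i, c i = 0) then 0
  else if (∃ i, c i = 2) then 2
  else 1

/-- Payoff to player `j`: winners in an `m'`-way tie receive `(m - m')/m'`,
losers receive `-1`. -/
noncomputable def imbPayoff {m : ℕ} (c : Fin m → Fin 3) (j : Fin m) : ℝ :=
  let W : Finset (Fin m) := Finset.univ.filter (fun i => c i = imbWinner c)
  if c j = imbWinner c then ((m : ℝ) - W.card) / W.card else -1

/-- Expected payoff of player `j` when each player `i` uses mixed strategy `σ i`. -/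
noncomputable def imbExpPayoff {m : ℕ} (σ : Fin m → Fin 3 → ℝ) (j : Fin m) : ℝ :=
  ∑ c : Fin m → Fin 3, (∏ i, σ i (c i)) * imbPayoff c j

/-- `σ` is a profile of mixed strategies. -/
def IsMixedProfile {m : ℕ} (σ : Fin m → Fin 3 → ℝ) : Prop :=
  ∀ i, (∀ o, 0 ≤ σ i o) ∧ ∑ o, σ i o = 1

/-- `σ` is a Nash equilibrium: no unilateral deviation increases a player's
expected payoff. -/
noncomputable def IsNashEq {m : ℕ} (σ : Fin m → Fin 3 → ℝ) : Prop :=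
  IsMixedProfile σ ∧
    ∀ j (τ : Fin 3 → ℝ), (∀ o, 0 ≤ τ o) → (∑ o, τ o = 1) →
      imbExpPayoff (Function.update σ j τ) j ≤ imbExpPayoff σ j

/-- The pure strategy playing object `o` with probability `1`. -/
def pure3 (o : Fin 3) : Fin 3 → ℝ := fun o' => if o' = o then 1 else 0

/-! Expected payoffs are multilinear, so it suffices to compare Rock and Paper against each
pure profile of the other players, and with no Scissors around Paper gains at least `1`:
if another player shows Paper, Rock loses (`-1`) while Paper shares the win (`≥ 0`); if all
others show Rock, Rock is an all-way tie (`0`) while Paper wins alone (`m - 1 ≥ 1`). Averaging,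
Rock is dominated, so an equilibrium never plays it. Against all-Paper, a lone Scissors wins
`m - 1`, whereas all-Paper pays `0`. -/

open Finset Function

section Winner

variable {m : ℕ} {c : Fin m → Fin 3}

lemma imbWinner_eq_zero (hR : ∃ i, c i = 0) (hP : ∀ i, c i ≠ 1) : imbWinner c = 0 := by
  unfold imbWinner
  split_ifs <;> grind

lemma imbWinner_eq_one (hS : ∀ i, c i ≠ 2) (hP : ∃ i, c i = 1) : imbWinner c = 1 := by
  unfold imbWinner
  split_ifs <;> grind

lemma imbWinner_eq_two (hR : ∀ i, c i ≠ 0) (hS : ∃ i, c i = 2) : imbWinner c = 2 := by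
  unfold imbWinner
  split_ifs <;> grind

end Winner

section Payoff

variable {m : ℕ} {c : Fin m → Fin 3} {j : Fin m}

lemma imbPayoff_of_ne_imbWinner (h : c j ≠ imbWinner c) : imbPayoff c j = -1 := by
  simp [imbPayoff, h]

lemma imbPayoff_nonneg (h : c j = imbWinner c) : 0 ≤ imbPayoff c j := by
  simp only [imbPayoff, h, if_true]
  have hle := card_filter_le univ fun i => c i = imbWinner c
  rw [card_univ, Fintype.card_fin] at hle
  exact div_nonneg (by rw [sub_nonneg]; exact_mod_cast hle) (Nat.cast_nonneg _)

lemma imbPayoff_of_forall_eq (h : c j = imbWinner c) (hall : ∀ i, c i = c j) :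
    imbPayoff c j = 0 := by
  have : univ.filter (fun i => c i = imbWinner c) = univ := by
    ext i; simp [hall i, h]
  simp [imbPayoff, h, this]

lemma imbPayoff_of_forall_ne (h : c j = imbWinner c) (huniq : ∀ i ≠ j, c i ≠ c j) :
    imbPayoff c j = m - 1 := by
  have : univ.filter (fun i => c i = imbWinner c) = {j} := by
    ext i; by_cases hij : i = j <;> simp [hij, ← h, huniq]
  simp [imbPayoff, h, this]

lemma imbPayoff_add_one_le_of_rock_to_paper (hm : 2 ≤ m) {c' : Fin m → Fin 3}
    (hc : c j = 0) (hc' : c' j = 1) (hagree : ∀ i ≠ j, c' i = c i) (hS : ∀ i, c i ≠ 2) :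
    imbPayoff c j + 1 ≤ imbPayoff c' j := by
  have hS' : ∀ i, c' i ≠ 2 := fun i => by
    by_cases hij : i = j
    · simp [hij, hc']
    · rw [hagree i hij]; exact hS i
  have hwin' : c' j = imbWinner c' := by rw [hc', imbWinner_eq_one hS' ⟨j, hc'⟩]
  by_cases hP : ∃ i, c i = 1
  · have hlose : c j ≠ imbWinner c := by simp [hc, imbWinner_eq_one hS hP]
    linarith [imbPayoff_of_ne_imbWinner hlose, imbPayoff_nonneg hwin']
  · push Not at hP
    have hallR : ∀ i, c i = 0 := fun i => by grind
    have hwin : c j = imbWinner c := by rw [hc, imbWinner_eq_zero ⟨j, hc⟩ hP]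
    have huniq : ∀ i ≠ j, c' i ≠ c' j := fun i hij => by simp [hagree i hij, hallR i, hc']
    rw [imbPayoff_of_forall_eq hwin (by simp [hallR]), imbPayoff_of_forall_ne hwin' huniq]
    have : (2 : ℝ) ≤ m := by exact_mod_cast hm
    linarith

end Payoff

section Expectation

variable {m : ℕ}

lemma imbExpPayoff_pure (c : Fin m → Fin 3) (j : Fin m) :
    imbExpPayoff (pure3 ∘ c) j = imbPayoff c j := by
  unfold imbExpPayoff
  rw [sum_eq_single c]
  · simp [pure3]
  · intro c' _ hc'
    obtain ⟨i, hi⟩ := Function.ne_iff.mp hc'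
    rw [prod_eq_zero (mem_univ i) (by simp [pure3, hi]), zero_mul]
  · simp

lemma imbExpPayoff_update (σ : Fin m → Fin 3 → ℝ) (j : Fin m) (τ : Fin 3 → ℝ) :
    imbExpPayoff (update σ j τ) j = ∑ a, τ a * ∑ r : {i // i ≠ j} → Fin 3,
      (∏ i : {i // i ≠ j}, σ i (r i)) *
        imbPayoff ((Equiv.funSplitAt j (Fin 3)).symm (a, r)) j := by
  unfold imbExpPayoff
  rw [← (Equiv.funSplitAt j (Fin 3)).symm.sum_comp, Fintype.sum_prod_type]
  refine sum_congr rfl fun a _ => ?_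
  rw [mul_sum]
  refine sum_congr rfl fun r _ => ?_
  rw [Fintype.prod_eq_mul_prod_subtype_ne _ j, mul_assoc]
  congr 2
  · simp
  · exact Fintype.prod_congr _ _ fun i => by simp [i.2]

lemma imbExpPayoff_update_pure (σ : Fin m → Fin 3 → ℝ) (j : Fin m) (a : Fin 3) :
    imbExpPayoff (update σ j (pure3 a)) j = ∑ r : {i // i ≠ j} → Fin 3,
      (∏ i : {i // i ≠ j}, σ i (r i)) *
        imbPayoff ((Equiv.funSplitAt j (Fin 3)).symm (a, r)) j := by
  simp [imbExpPayoff_update, pure3]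

lemma imbExpPayoff_update_eq_sum_pure (σ : Fin m → Fin 3 → ℝ) (j : Fin m)
    (τ : Fin 3 → ℝ) :
    imbExpPayoff (update σ j τ) j = ∑ a, τ a * imbExpPayoff (update σ j (pure3 a)) j := by
  simp_rw [imbExpPayoff_update_pure]
  exact imbExpPayoff_update σ j τ

lemma imbExpPayoff_eq_sum_pure (σ : Fin m → Fin 3 → ℝ) (j : Fin m) :
    imbExpPayoff σ j = ∑ a, σ j a * imbExpPayoff (update σ j (pure3 a)) j := by
  conv_lhs => rw [← update_eq_self j σ]
  exact imbExpPayoff_update_eq_sum_pure σ j (σ j)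

end Expectation

lemma pure3_nonneg (o o' : Fin 3) : 0 ≤ pure3 o o' := by
  unfold pure3; split_ifs <;> norm_num

lemma sum_pure3 (o : Fin 3) : ∑ o', pure3 o o' = 1 := by
  simp [pure3]

lemma IsNashEq.apply_eq_zero_of_lt {m : ℕ} {σ : Fin m → Fin 3 → ℝ} (h : IsNashEq σ)
    {j : Fin m} {a b : Fin 3}
    (hab : imbExpPayoff (update σ j (pure3 a)) j < imbExpPayoff (update σ j (pure3 b)) j) :
    σ j a = 0 := by
  set v := fun o => imbExpPayoff (update σ j (pure3 o)) j
  have hdev (o : Fin 3) : v o ≤ imbExpPayoff σ j :=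
    h.2 j (pure3 o) (pure3_nonneg o) (sum_pure3 o)
  -- the equilibrium payoff is a convex combination of the `v o`, none of which exceeds it
  have hle : σ j a * (imbExpPayoff σ j - v a) ≤ ∑ o, σ j o * (imbExpPayoff σ j - v o) :=
    single_le_sum (fun o _ => mul_nonneg ((h.1 j).1 o) (sub_nonneg.2 (hdev o))) (mem_univ a)
  have hzero : ∑ o, σ j o * (imbExpPayoff σ j - v o) = 0 := by
    simp only [mul_sub, sum_sub_distrib, ← sum_mul, (h.1 j).2, one_mul, v,
      ← imbExpPayoff_eq_sum_pure, sub_self]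
  nlinarith [hdev b, (h.1 j).1 a]

theorem imbExpPayoff_rock_add_one_le_paper {m : ℕ} (hm : 2 ≤ m) {σ : Fin m → Fin 3 → ℝ}
    (hprof : IsMixedProfile σ) (hnoS : ∀ i, σ i 2 = 0) (j : Fin m) :
    imbExpPayoff (update σ j (pure3 0)) j + 1 ≤ imbExpPayoff (update σ j (pure3 1)) j := by
  let join := fun (a : Fin 3) r => (Equiv.funSplitAt j (Fin 3)).symm (a, r)
  have hmass : ∑ r : {i // i ≠ j} → Fin 3, ∏ i : {i // i ≠ j}, σ i (r i) = 1 := by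
    rw [← Fintype.prod_sum]
    exact prod_eq_one fun i _ => (hprof i).2
  simp_rw [imbExpPayoff_update_pure]
  rw [← hmass, ← sum_add_distrib]
  refine sum_le_sum fun r _ => ?_
  have hw0 : 0 ≤ ∏ i : {i // i ≠ j}, σ i (r i) := prod_nonneg fun i _ => (hprof i).1 _
  rcases hw0.eq_or_lt with hw | hw
  · simp [← hw]
  have hrS (i : {i // i ≠ j}) : r i ≠ 2 := fun hi =>
    hw.ne' (prod_eq_zero (mem_univ i) (by rw [hi, hnoS]))
  have hstep : imbPayoff (join 0 r) j + 1 ≤ imbPayoff (join 1 r) j := by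
    refine imbPayoff_add_one_le_of_rock_to_paper hm (by simp [join]) (by simp [join])
      (fun i hij => by simp [join, hij]) fun i => ?_
    by_cases hij : i = j
    · simp [join, hij]
    · simpa [join, hij] using hrS ⟨i, hij⟩
  nlinarith

lemma imbExpPayoff_allPaper {m : ℕ} (j : Fin m) :
    imbExpPayoff (fun _ => pure3 1) j = 0 := by
  rw [show (fun _ : Fin m => pure3 1) = pure3 ∘ fun _ => 1 from rfl, imbExpPayoff_pure]
  exact imbPayoff_of_forall_eq (imbWinner_eq_one (by simp) ⟨j, rfl⟩).symm fun _ => rfl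

lemma imbExpPayoff_allPaper_update_scissors {m : ℕ} (j : Fin m) :
    imbExpPayoff (update (fun _ => pure3 1) j (pure3 2)) j = m - 1 := by
  rw [show update (fun _ => pure3 1) j (pure3 2) = pure3 ∘ update (fun _ => 1) j 2 from
    (comp_update pure3 _ j 2).symm, imbExpPayoff_pure]
  refine imbPayoff_of_forall_ne ?_ fun i hij => by simp [hij]
  rw [imbWinner_eq_two (fun i => ?_) ⟨j, by simp⟩]
  · simp
  · by_cases hij : i = j <;> simp [hij]

/-- If no player ever plays `S` (object `2`): Rock is strictly dominated by
Paper for every player; any Nash equilibrium among such profiles has every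
player playing pure Paper; the all-Paper profile is not a Nash equilibrium,
since deviating to Scissors yields payoff `m - 1 > 0`. -/
theorem stmt_16 (m : ℕ) (hm : 2 ≤ m) (σ : Fin m → Fin 3 → ℝ)
    (hprof : IsMixedProfile σ) (hnoS : ∀ i : Fin m, σ i 2 = 0) :
    (∀ j : Fin m,
      imbExpPayoff (Function.update σ j (pure3 0)) j <
        imbExpPayoff (Function.update σ j (pure3 1)) j) ∧
    (IsNashEq σ → ∀ i : Fin m, σ i 1 = 1) ∧
    ¬ IsNashEq (fun _ : Fin m => pure3 1) ∧
    (∀ j : Fin m,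
      imbExpPayoff (Function.update (fun _ : Fin m => pure3 1) j (pure3 2)) j
        = (m : ℝ) - 1 ∧ (0 : ℝ) < (m : ℝ) - 1) := by
  have hdom (j : Fin m) := imbExpPayoff_rock_add_one_le_paper hm hprof hnoS j
  have hm1 : (0 : ℝ) < m - 1 := by
    rw [sub_pos]; exact_mod_cast hm
  refine ⟨fun j => by linarith [hdom j], fun hnash i => ?_, fun hnash => ?_,
    fun j => ⟨imbExpPayoff_allPaper_update_scissors j, hm1⟩⟩
  · have hR : σ i 0 = 0 := hnash.apply_eq_zero_of_lt (b := 1) (by linarith [hdom i])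
    have hsum := (hprof i).2
    rw [Fin.sum_univ_three, hR, hnoS i] at hsum
    linarith
  · let j : Fin m := ⟨0, by omega⟩
    have hdev := hnash.2 j (pure3 2) (pure3_nonneg 2) (sum_pure3 2)
    rw [imbExpPayoff_allPaper_update_scissors, imbExpPayoff_allPaper] at hdev
    linarith
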